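/- arXiv:1401.3142 — 8 statements merged into one kernel-verified Lean document; each statement's English description precedes it below -/
import Mathlib

section
/- Let G be a group and U a subgroup of G which is commensurated by G. Suppose that G is generated by finitely many left cosets of U, and that UK = G, where K denotes the set of all elements of G that centralise some finite-index subgroup of U. Then the normal core of U in G (the intersection of all conjugates gUg^{-1}, g ∈ G) has finite index in U. -/
open Pointwise

/-- A subgroup `K` is commensurated by `G` if each of its conjugates is commensurate with it. -/
def CommensuratedBy {G : Type*} [Group G] (K : Subgroup G) : Prop :=
  ∀ g : G, Subgroup.Commensurable (K.map (MulAut.conj g).toMonoidHom) K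

/-!
Write each generator `f ∈ F` as `f = u_f k_f` with `u_f ∈ U` and `k_f` centralising a
finite-index subgroup `V_f` of `U`. The core `M` in `U` of `⋂ V_f` still has finite index in `U`,
is normalised by `U`, and is centralised, hence normalised, by every `k_f`. So `M` is normalised by
all of `F ∪ U`, i.e. by `G`; being normal and contained in `U`, it lies in the normal core of `U`.
-/

namespace Subgroup

variable {G : Type*} [Group G]

theorem exists_le_relIndex_ne_zero_le_normalizer {H V : Subgroup G} (hV : V.relIndex H ≠ 0) :
    ∃ M ≤ V ⊓ H, M.relIndex H ≠ 0 ∧ H ≤ normalizer (M : Set G) := by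
  have : (V.subgroupOf H).FiniteIndex := ⟨hV⟩
  set M := (V.subgroupOf H).normalCore.map H.subtype
  have hM : M.subgroupOf H = (V.subgroupOf H).normalCore :=
    comap_map_eq_self_of_injective H.subtype_injective _
  have hMH : M ≤ H := map_subtype_le _
  have : (M.subgroupOf H).Normal := hM ▸ normalCore_normal _
  refine ⟨M, ?_, ?_, le_normalizer_of_normal_subgroupOf hMH⟩
  · exact subgroupOf_map_subtype V H ▸ map_mono (normalCore_le _)
  · rw [relIndex, hM]
    exact FiniteIndex.index_ne_zero

theorem mul_mem_normalizer_of_commute {M V : Subgroup G} {u k : G}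
    (hu : u ∈ normalizer (M : Set G)) (hk : ∀ v ∈ V, k * v = v * k) (hMV : M ≤ V) :
    u * k ∈ normalizer (M : Set G) :=
  mul_mem hu <| centralizer_le_normalizer _ <|
    centralizer_le hMV <| mem_centralizer_iff.mpr fun v hv => (hk v hv).symm

theorem eq_top_of_closure_mul_eq_top {S T : Set G} {N : Subgroup G}
    (hST : closure (S * T) = ⊤) (hS : S ⊆ N) (hT : T ⊆ N) : N = ⊤ :=
  top_le_iff.mp <| hST ▸ (closure_le N).mpr <|
    Set.mul_subset_iff.mpr fun _ hs _ ht => mul_mem (hS hs) (hT ht)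

end Subgroup

theorem normalCore_finite_index_of_UK_eq_G_general
    (G : Type*) [Group G] (U : Subgroup G)
    (hgen : ∃ F : Finset G, Subgroup.closure ((F : Set G) * (U : Set G)) = ⊤)
    (hUK : ∀ g : G, ∃ u ∈ U, ∃ k : G,
      (∃ V : Subgroup G, V ≤ U ∧ V.relIndex U ≠ 0 ∧ ∀ v ∈ V, k * v = v * k) ∧ g = u * k) :
    U.normalCore.relIndex U ≠ 0 := by
  obtain ⟨F, hF⟩ := hgen
  choose u hu k hk hg using hUK
  choose V _ hVrel hVcent using hk
  obtain ⟨M, hMVU, hMrel, hUM⟩ := Subgroup.exists_le_relIndex_ne_zero_le_normalizer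
    (Subgroup.relIndex_iInf_ne_zero fun f : F => hVrel f)
  have hMV (f : G) (hf : f ∈ F) : M ≤ V f :=
    hMVU.trans <| inf_le_left.trans <| iInf_le (fun f : F => V f) ⟨f, hf⟩
  have hFM : (F : Set G) ⊆ Subgroup.normalizer (M : Set G) := fun f hf =>
    hg f ▸ Subgroup.mul_mem_normalizer_of_commute (hUM (hu f)) (hVcent f) (hMV f hf)
  have : M.Normal :=
    Subgroup.normalizer_eq_top_iff.mp (Subgroup.eq_top_of_closure_mul_eq_top hF hFM hUM)
  have hMcore : M ≤ U.normalCore :=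
    Subgroup.normal_le_normalCore.mpr (hMVU.trans inf_le_right)
  exact fun h0 => hMrel (Subgroup.relIndex_eq_zero_of_le_left hMcore h0)

/-- Let `(G,U)` be a Hecke pair with `G` generated by finitely many cosets
of `U`, and suppose `UK = G` where `K` is the set of elements centralising a finite-index
subgroup of `U`. Then the normal core of `U` in `G` has finite index in `U`. -/
theorem normalCore_finite_index_of_UK_eq_G
    (G : Type*) [Group G] (U : Subgroup G) (hcomm : CommensuratedBy U)
    (hgen : ∃ F : Finset G, Subgroup.closure ((F : Set G) * (U : Set G)) = ⊤)
    (hUK : ∀ g : G, ∃ u ∈ U, ∃ k : G,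
      (∃ V : Subgroup G, V ≤ U ∧ V.relIndex U ≠ 0 ∧ ∀ v ∈ V, k * v = v * k) ∧ g = u * k) :
    U.normalCore.relIndex U ≠ 0 :=
  normalCore_finite_index_of_UK_eq_G_general G U hgen hUK
end

section
/- Let G be a t.d.l.c. group in which every infinite locally normal subgroup that is commensurated by G is open. Then every closed normal subgroup of G is either discrete or open. -/
/-!
By van Dantzig's theorem `G` has a compact open subgroup `U`. For a closed normal subgroup `N`,
`K = N ⊓ U` is compact and normalised by the open subgroup `U`. Its conjugates are the groups
`N ⊓ gUg⁻¹`, and any two intersections of `N` with open subgroups that are compact are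
commensurate, because an open subgroup has finite index in a compact one. So if `K` is infinite it
is open by hypothesis, and then so is `N ⊇ K`; if `K` is finite, `1` is isolated in `N`.
-/

open Set Topology

theorem Subgroup.le_normalizer_inf_of_normal {G : Type*} [Group G] {N U : Subgroup G} [N.Normal] :
    U ≤ normalizer ((N ⊓ U : Subgroup G) : Set G) :=
  (le_inf le_normalizer_of_normal le_normalizer).trans inf_normalizer_le_normalizer_inf

section

variable {G : Type*} [Group G] [TopologicalSpace G] [IsTopologicalGroup G]

/- The stabiliser of `W` under right translations is contained in `W` (as `1 ∈ W`), and it is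
open because `W * V ⊆ W` for some neighbourhood `V` of `1`, by compactness of `W`. -/
theorem exists_isOpen_subgroup_subset_of_isCompact {W : Set G} (hWc : IsCompact W)
    (hWo : IsOpen W) (hW1 : (1 : G) ∈ W) :
    ∃ H : Subgroup G, IsOpen (H : Set G) ∧ (H : Set G) ⊆ W := by
  let H : Subgroup G :=
    { carrier := {g | ∀ w, w * g ∈ W ↔ w ∈ W}
      mul_mem' := fun ha hb w => by rw [← mul_assoc, hb, ha]
      one_mem' := by simp
      inv_mem' := fun {a} ha w => by rw [← ha, inv_mul_cancel_right] }
  obtain ⟨V, hV, hWV⟩ := compact_open_separated_mul_right hWc hWo subset_rfl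
  have hVH : V ∩ V⁻¹ ⊆ H := fun v ⟨hv, hv'⟩ w =>
    ⟨fun h => by simpa using hWV (mul_mem_mul h hv'),
      fun h => hWV (mul_mem_mul h hv)⟩
  refine ⟨H, H.isOpen_of_mem_nhds (g := 1) ?_, fun g hg => by simpa using (hg 1).2 hW1⟩
  exact Filter.mem_of_superset (Filter.inter_mem hV (inv_mem_nhds_one G hV)) hVH

theorem exists_isCompact_isOpen_subgroup [LocallyCompactSpace G] [TotallyDisconnectedSpace G]
    [T2Space G] : ∃ U : Subgroup G, IsCompact (U : Set G) ∧ IsOpen (U : Set G) := by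
  obtain ⟨s, hsc, hs⟩ := exists_compact_mem_nhds (1 : G)
  obtain ⟨W, ⟨hWcl, hWo⟩, hW1, hWs⟩ :=
    loc_compact_Haus_tot_disc_of_zero_dim.mem_nhds_iff.mp hs
  have hWc : IsCompact W := hsc.of_isClosed_subset hWcl hWs
  obtain ⟨U, hUo, hUW⟩ := exists_isOpen_subgroup_subset_of_isCompact hWc hWo hW1
  exact ⟨U, hWc.of_isClosed_subset (U.isClosed_of_isOpen hUo) hUW, hUo⟩

namespace Subgroup

theorem relIndex_ne_zero_of_isOpen_of_isCompact {H K : Subgroup G}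
    (hH : IsOpen (H : Set G)) (hK : IsCompact (K : Set G)) : H.relIndex K ≠ 0 := by
  have : CompactSpace K := isCompact_iff_compactSpace.mp hK
  have := (H.subgroupOf K).quotient_finite_of_isOpen (hH.preimage continuous_subtype_val)
  exact index_ne_zero_of_finite

theorem relIndex_inf_ne_zero_of_isOpen {N U V : Subgroup G} (hU : IsOpen (U : Set G))
    (hNV : IsCompact ((N ⊓ V : Subgroup G) : Set G)) : (N ⊓ U).relIndex (N ⊓ V) ≠ 0 := by
  have h : N ⊓ U ⊓ (N ⊓ V) = U ⊓ (N ⊓ V) := by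
    ext; simp only [mem_inf]; tauto
  rw [← inf_relIndex_right, h, inf_relIndex_right]
  exact relIndex_ne_zero_of_isOpen_of_isCompact hU hNV

theorem commensurable_inf_of_isOpen {N U V : Subgroup G} (hU : IsOpen (U : Set G))
    (hV : IsOpen (V : Set G)) (hNU : IsCompact ((N ⊓ U : Subgroup G) : Set G))
    (hNV : IsCompact ((N ⊓ V : Subgroup G) : Set G)) : Commensurable (N ⊓ U) (N ⊓ V) :=
  ⟨relIndex_inf_ne_zero_of_isOpen hU hNV, relIndex_inf_ne_zero_of_isOpen hV hNU⟩

theorem commensuratedBy_inf_of_normal {N U : Subgroup G} [N.Normal] (hU : IsOpen (U : Set G))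
    (hNU : IsCompact ((N ⊓ U : Subgroup G) : Set G)) : CommensuratedBy (N ⊓ U) := by
  intro g
  set φ := (MulAut.conj g).toMonoidHom
  have hmap : (N ⊓ U).map φ = N ⊓ U.map φ := by
    rw [map_inf _ _ _ (MulAut.conj g).injective]
    exact congrArg (· ⊓ _) (Normal.map_conj_eq N g)
  have hUg : IsOpen (U.map φ : Set G) := hU.smul (ConjAct.toConjAct g)
  have hNUg : IsCompact ((N ⊓ U.map φ : Subgroup G) : Set G) :=
    hmap ▸ hNU.image (IsTopologicalGroup.continuous_conj g)
  rw [hmap]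
  exact commensurable_inf_of_isOpen hUg hU hNUg hNU

theorem discreteTopology_of_finite_inter {N : Subgroup G} {U : Set G} [T1Space G]
    (hU : U ∈ 𝓝 1) (hNU : ((N : Set G) ∩ U).Finite) : DiscreteTopology N := by
  rw [discreteTopology_iff_isOpen_singleton_one]
  refine isOpen_singleton_of_finite_mem_nhds 1
    (continuous_subtype_val.continuousAt.preimage_mem_nhds hU) ?_
  exact (hNU.preimage Subtype.val_injective.injOn).subset fun x hx => ⟨x.2, hx⟩

end Subgroup

end

/-- Let `G` be a t.d.l.c. group in which every infinite commensurated locally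
normal subgroup is open. Then every closed normal subgroup of `G` is discrete or open. -/
theorem closed_normal_discrete_or_open_of_SU
    (G : Type*) [Group G] [TopologicalSpace G] [IsTopologicalGroup G]
    [LocallyCompactSpace G] [TotallyDisconnectedSpace G] [T2Space G]
    (hSU : ∀ H : Subgroup G, IsCompact (H : Set G) → IsOpen (Subgroup.normalizer (H : Set G) : Set G) →
      (H : Set G).Infinite → CommensuratedBy H → IsOpen (H : Set G)) :
    ∀ N : Subgroup G, N.Normal → IsClosed (N : Set G) →
      DiscreteTopology ↥N ∨ IsOpen (N : Set G) := by
  intro N hN hNc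
  obtain ⟨U, hUc, hUo⟩ := exists_isCompact_isOpen_subgroup (G := G)
  have hK : IsCompact ((N ⊓ U : Subgroup G) : Set G) :=
    hUc.of_isClosed_subset (hNc.inter (U.isClosed_of_isOpen hUo)) inter_subset_right
  by_cases hinf : ((N ⊓ U : Subgroup G) : Set G).Infinite
  · right
    have hKo := hSU _ hK (Subgroup.isOpen_mono Subgroup.le_normalizer_inf_of_normal hUo) hinf
      (Subgroup.commensuratedBy_inf_of_normal hUo hK)
    exact Subgroup.isOpen_mono inf_le_left hKo
  · left
    exact Subgroup.discreteTopology_of_finite_inter (hUo.mem_nhds U.one_mem)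
      (not_infinite.mp hinf)
end

section
/- Let G be a compactly generated, topologically simple t.d.l.c. group, and let L be a subgroup of G whose normaliser in G is open. Then there is a finite subset Σ of G such that the subgroup ⟨Σ ∪ L⟩ generated by Σ and L equals the normal closure of L in G (the smallest normal subgroup of G containing L). -/
/-!
Let `U` be a compact open subgroup of the normaliser of `L` (van Dantzig) and `X` a compact
generating set. The compact set `K = U (X ∪ X⁻¹) U` is a finite union of cosets `fU`. By
simplicity the normal closure `W` of `L` is dense (unless `L = 1`), so the representatives `f`
can be taken in `W`. For `H = ⟨F ∪ L⟩`, symmetry and `U`-invariance of `K = FU` give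
`UH ⊆ HU`, so `HU` is a subgroup; it contains `X`, hence `G = HU`. As `U` normalises `L`,
every conjugate `(hu) L (hu)⁻¹ = h L h⁻¹` of `L` lies in `H`.
-/

open Set Pointwise

namespace Subgroup

variable {G : Type*} [Group G]

theorem closure_subset_of_mul_subset {S C : Set G} (hS : S * C ⊆ C) (hS' : S⁻¹ * C ⊆ C)
    (hC : (1 : G) ∈ C) : (closure S : Set G) ⊆ C := by
  suffices ∀ g ∈ closure S, ∀ c ∈ C, g * c ∈ C from
    fun g hg ↦ mul_one g ▸ this g hg 1 hC
  intro g hg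
  induction hg using closure_induction'' with
  | mem s hs => exact fun c hc ↦ hS (mul_mem_mul hs hc)
  | inv_mem s hs => exact fun c hc ↦ hS' (mul_mem_mul (inv_mem_inv.2 hs) hc)
  | one => simp
  | mul x y _ _ hx hy => exact fun c hc ↦ mul_assoc x y c ▸ hx _ (hy c hc)

theorem coe_mul_closure_subset_closure_mul {U : Subgroup G} {S : Set G}
    (hS : (U : Set G) * S ⊆ closure S * U) (hS' : (U : Set G) * S⁻¹ ⊆ closure S * U) :
    (U : Set G) * closure S ⊆ closure S * U := by
  suffices ∀ g ∈ closure S, (U : Set G) * {g} ⊆ closure S * U by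
    rintro _ ⟨u, hu, g, hg, rfl⟩
    exact this g hg (mul_mem_mul hu rfl)
  intro g hg
  induction hg using closure_induction'' with
  | mem s hs => exact (mul_subset_mul_left (singleton_subset_iff.2 hs)).trans hS
  | inv_mem s hs =>
    exact (mul_subset_mul_left (singleton_subset_iff.2 (inv_mem_inv.2 hs))).trans hS'
  | one => simpa using subset_mul_right _ (closure S).one_mem
  | mul x y _ _ hx hy =>
    calc (U : Set G) * {x * y} = U * {x} * {y} := by rw [← singleton_mul_singleton, mul_assoc]
      _ ⊆ closure S * (U * {y}) := by rw [← mul_assoc]; exact mul_subset_mul_right hx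
      _ ⊆ closure S * (closure S * U) := mul_subset_mul_left hy
      _ = closure S * U := by rw [← mul_assoc, coe_mul_coe]

theorem closure_subset_mul_of_mul_subset {U H : Subgroup G} {X : Set G}
    (hUH : (U : Set G) * H ⊆ (H : Set G) * U) (hX : X ⊆ (H : Set G) * U) :
    (closure X : Set G) ⊆ (H : Set G) * U := by
  intro g hg
  induction hg using closure_induction with
  | mem x hx => exact hX hx
  | one => exact ⟨1, H.one_mem, 1, U.one_mem, mul_one 1⟩
  | mul x y _ _ hx hy =>
    refine (?_ : (H : Set G) * U * (H * U) ⊆ H * U) (mul_mem_mul hx hy)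
    calc (H : Set G) * U * (H * U) = H * (U * H) * U := by simp only [mul_assoc]
      _ ⊆ H * (H * U) * U := mul_subset_mul_right (mul_subset_mul_left hUH)
      _ = H * U := by rw [← mul_assoc, coe_mul_coe, mul_assoc, coe_mul_coe]
  | inv x _ hx =>
    refine (?_ : ((H : Set G) * U)⁻¹ ⊆ H * U) (inv_mem_inv.2 hx)
    rwa [mul_inv_rev, inv_coe_set, inv_coe_set]

theorem normalClosure_le_of_coe_mul_eq_univ {U H L : Subgroup G}
    (hHU : (H : Set G) * (U : Set G) = univ) (hUL : U ≤ normalizer (L : Set G)) (hLH : L ≤ H) :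
    normalClosure (L : Set G) ≤ H := by
  rw [normalClosure, closure_le]
  intro x hx
  obtain ⟨l, hl, hlx⟩ := Group.mem_conjugatesOfSet_iff.1 hx
  obtain ⟨g, rfl⟩ := isConj_iff.1 hlx
  obtain ⟨h, hh, u, hu, rfl⟩ := hHU.symm ▸ mem_univ g
  have hul : u * l * u⁻¹ ∈ L := (mem_normalizer_iff.1 (hUL hu) l).1 hl
  simpa only [mul_inv_rev, mul_assoc, SetLike.mem_coe] using
    H.mul_mem (H.mul_mem hh (hLH hul)) (H.inv_mem hh)

theorem normalClosure_le_closure_union {U L : Subgroup G} {F : Set G}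
    (hUL : U ≤ normalizer (L : Set G)) (hUF : (U : Set G) * (F * U) ⊆ F * U)
    (hFU : (F * (U : Set G))⁻¹ ⊆ F * U) (hgen : closure (F * (U : Set G)) = ⊤) :
    normalClosure (L : Set G) ≤ closure (F ∪ L) := by
  set H := closure (F ∪ (L : Set G))
  have hFH : F ⊆ H := subset_union_left.trans subset_closure
  have hLH : L ≤ H := fun _ hl ↦ subset_closure (Or.inr hl)
  have hFUH : F * (U : Set G) ⊆ (H : Set G) * U := mul_subset_mul_right hFH
  have hULH : (U : Set G) * L ⊆ H * U := by
    rw [set_mul_normalizer_comm _ _ hUL]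
    exact mul_subset_mul_right hLH
  have hgens : (U : Set G) * (F ∪ L) ⊆ H * U := by
    rw [mul_union]
    refine union_subset ?_ hULH
    exact ((mul_subset_mul_left (subset_mul_left F U.one_mem)).trans hUF).trans hFUH
  have hgens' : (U : Set G) * (F ∪ L)⁻¹ ⊆ H * U := by
    rw [union_inv, inv_coe_set, mul_union]
    refine union_subset ?_ hULH
    rw [← inv_coe_set (H := U), ← mul_inv_rev, inv_coe_set]
    exact hFU.trans hFUH
  have hHU : (H : Set G) * (U : Set G) = univ := by
    refine eq_univ_of_univ_subset ?_
    rw [← coe_top, ← hgen]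
    exact closure_subset_mul_of_mul_subset (coe_mul_closure_subset_closure_mul hgens hgens') hFUH
  exact normalClosure_le_of_coe_mul_eq_univ hHU hUL hLH

end Subgroup

theorem exists_isClopen_isCompact_subset {X : Type*} [TopologicalSpace X] [LocallyCompactSpace X]
    [T2Space X] [TotallyDisconnectedSpace X] {x : X} {N : Set X} (hN : IsOpen N) (hx : x ∈ N) :
    ∃ C, IsClopen C ∧ IsCompact C ∧ x ∈ C ∧ C ⊆ N := by
  obtain ⟨K, hK, hxK, hKN⟩ := exists_compact_subset hN hx
  obtain ⟨C, hC, hxC, hCK⟩ :=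
    loc_compact_Haus_tot_disc_of_zero_dim.mem_nhds_iff.1 (isOpen_interior.mem_nhds hxK)
  exact ⟨C, hC, hK.of_isClosed_subset hC.isClosed (hCK.trans interior_subset), hxC,
    hCK.trans (interior_subset.trans hKN)⟩

section TopologicalGroup

variable {G : Type*} [Group G] [TopologicalSpace G] [IsTopologicalGroup G]

theorem exists_isCompact_isOpen_subgroup_subset [LocallyCompactSpace G] [T2Space G]
    [TotallyDisconnectedSpace G] {N : Set G} (hN : IsOpen N) (h1 : (1 : G) ∈ N) :
    ∃ U : Subgroup G, IsCompact (U : Set G) ∧ IsOpen (U : Set G) ∧ (U : Set G) ⊆ N := by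
  obtain ⟨C, hC, hCc, h1C, hCN⟩ := exists_isClopen_isCompact_subset hN h1
  obtain ⟨V, hV, hVC⟩ := compact_open_separated_mul_left hCc hC.isOpen Subset.rfl
  have hVC' : (V ∩ V⁻¹) * C ⊆ C := (mul_subset_mul_right inter_subset_left).trans hVC
  have hUC : (Subgroup.closure (V ∩ V⁻¹) : Set G) ⊆ C := by
    refine Subgroup.closure_subset_of_mul_subset hVC' ?_ h1C
    rwa [inter_inv, inv_inv, inter_comm]
  have hUo : IsOpen (Subgroup.closure (V ∩ V⁻¹) : Set G) :=
    Subgroup.isOpen_of_mem_nhds _ <| Filter.mem_of_superset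
      (Filter.inter_mem hV (inv_mem_nhds_one G hV)) Subgroup.subset_closure
  exact ⟨_, hCc.of_isClosed_subset (Subgroup.isClosed_of_isOpen _ hUo) hUC, hUo, hUC.trans hCN⟩

theorem IsCompact.exists_finset_subset_mul_eq {K W : Set G} {U : Subgroup G} (hK : IsCompact K)
    (hKU : K * U = K) (hU : IsOpen (U : Set G)) (hW : Dense W) :
    ∃ F : Finset G, ↑F ⊆ W ∧ (F : Set G) * U = K := by
  have hcover : K ⊆ ⋃ w ∈ W ∩ K, w • (U : Set G) := by
    intro k hk
    obtain ⟨_, ⟨u, hu, rfl⟩, hw⟩ :=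
      hW.inter_open_nonempty _ (hU.smul k) ⟨k, mem_smul_set.2 ⟨1, U.one_mem, mul_one k⟩⟩
    exact mem_iUnion₂.2 ⟨k * u, ⟨hw, hKU ▸ mul_mem_mul hk hu⟩,
      mem_smul_set.2 ⟨u⁻¹, U.inv_mem hu, by simp [smul_eq_mul]⟩⟩
  obtain ⟨t, htWK, ht, hKt⟩ := hK.elim_finite_subcover_image (fun w _ ↦ hU.smul w) hcover
  refine ⟨ht.toFinset, by simpa using htWK.trans inter_subset_left, subset_antisymm ?_ ?_⟩
  · rw [Finite.coe_toFinset]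
    exact (mul_subset_mul_right (htWK.trans inter_subset_right)).trans hKU.subset
  · rwa [Finite.coe_toFinset, ← iUnion_mul_left_image]

end TopologicalGroup

/-- Let `G` be a compactly generated topologically simple t.d.l.c. group, and
let `L` be a subgroup with open normaliser. Then there is a finite set `S ⊆ G` such that
`⟨S ∪ L⟩` is the normal closure of `L` in `G`. -/
theorem normalClosure_eq_closure_of_finset_union
    (G : Type*) [Group G] [TopologicalSpace G] [IsTopologicalGroup G]
    [LocallyCompactSpace G] [TotallyDisconnectedSpace G] [T2Space G]
    (hcg : ∃ S : Set G, IsCompact S ∧ Subgroup.closure S = ⊤)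
    (hts : ∀ N : Subgroup G, N.Normal → IsClosed (N : Set G) → N = ⊥ ∨ N = ⊤)
    (L : Subgroup G) (hL : IsOpen (Subgroup.normalizer (L : Set G) : Set G)) :
    ∃ S : Finset G,
      Subgroup.closure ((S : Set G) ∪ (L : Set G)) = Subgroup.normalClosure (L : Set G) := by
  obtain ⟨X, hXc, hXgen⟩ := hcg
  obtain ⟨U, hUc, hUo, hUL⟩ :=
    exists_isCompact_isOpen_subgroup_subset hL (Subgroup.normalizer _).one_mem
  set W := Subgroup.normalClosure (L : Set G)
  rcases hts _ (Subgroup.is_normal_topologicalClosure W) W.isClosed_topologicalClosure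
    with hW₀ | hW
  · have hW : W = ⊥ := le_bot_iff.1 (hW₀ ▸ W.le_topologicalClosure)
    have hL : L = ⊥ := le_bot_iff.1 (hW ▸ Subgroup.le_normalClosure)
    exact ⟨∅, by simp [hW, hL]⟩
  have hWd : Dense (W : Set G) := by
    rw [dense_iff_closure_eq, ← Subgroup.topologicalClosure_coe, hW, Subgroup.coe_top]
  set K := (U : Set G) * (X ∪ X⁻¹) * U
  have hKU : K * U = K := by simp only [K, mul_assoc, coe_mul_coe]
  obtain ⟨F, hFW, hFK⟩ :=
    ((hUc.mul (hXc.union hXc.inv)).mul hUc).exists_finset_subset_mul_eq hKU hUo hWd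
  refine ⟨F, le_antisymm ((Subgroup.closure_le _).2 ?_) ?_⟩
  · exact union_subset hFW Subgroup.le_normalClosure
  refine Subgroup.normalClosure_le_closure_union hUL ?_ ?_ ?_ <;> rw [hFK]
  · simp only [← mul_assoc, coe_mul_coe, subset_rfl]
  · simp only [mul_inv_rev, inv_coe_set, union_inv, inv_inv, union_comm, mul_assoc, subset_rfl]
  · refine eq_top_mono (Subgroup.closure_mono ?_) hXgen
    exact subset_union_left.trans
      ((subset_mul_right _ U.one_mem).trans (subset_mul_left _ U.one_mem))
end

section
/- Let G be a topologically simple t.d.l.c. group, and let A and B be non-trivial subnormal subgroups of G (not necessarily closed). Then A ∩ B is dense in G. Moreover, if B is the normal closure in G of a locally normal subgroup L of G, then B = ⟨(A ∩ B) ∪ L⟩; in particular, B is the smallest subnormal subgroup of G containing L. -/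
/-!
Non-trivial subnormal subgroups are dense, one step of the chain at a time: if `A ⊴ H` with `H`
dense, then `H`, hence all of `G`, normalises the closure of `A`, and topological simplicity
forces `closure A = G`.

For `A ⊴ H` and `B ⊴ K` the commutators `⁅A ∩ K, H ∩ B⁆` lie in `A ∩ B`. By induction along both
chains `A ∩ K` is dense and `H ∩ B` non-trivial, so `A ∩ B = 1` would make `H ∩ B` central; but
the centre is a closed normal subgroup, hence trivial unless `G` is abelian. An abelian `G` is
discrete by van Dantzig's theorem (an open subgroup avoiding some `g ≠ 1` must be trivial), so
every non-trivial subgroup is all of `G`.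

If `B` is the normal closure of `L` and `N(L)` is open, a conjugate `g L g⁻¹` equals `d L d⁻¹`
for any `d` in the non-empty open set `g N(L)` that meets the dense subgroup `A ∩ B`.
-/

/-- A subgroup is subnormal if it is joined to the whole group by a finite chain of
successively normal subgroups. -/
def IsSubnormal {G : Type*} [Group G] (A : Subgroup G) : Prop :=
  ∃ n : ℕ, ∃ c : Fin (n + 1) → Subgroup G, c 0 = A ∧ c (Fin.last n) = ⊤ ∧
    ∀ i : Fin n, c i.castSucc ≤ c i.succ ∧
      ∀ x ∈ c i.succ, ∀ a ∈ c i.castSucc, x * a * x⁻¹ ∈ c i.castSucc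

theorem IsSubnormal.isSubnormal {G : Type*} [Group G] {A : Subgroup G} (h : IsSubnormal A) :
    A.IsSubnormal := by
  obtain ⟨n, c, rfl, hlast, hstep⟩ := h
  induction n with
  | zero => exact (hlast : c 0 = ⊤) ▸ .top
  | succ n ih =>
    have hc₁ : (c 1).IsSubnormal :=
      ih (fun i => c i.succ) hlast fun i => by simp only [Fin.succ_castSucc]; exact hstep i.succ
    exact .step _ _ (hstep 0).1 hc₁ <| (Subgroup.normal_subgroupOf_iff (hstep 0).1).mpr
      fun a x ha hx => (hstep 0).2 x hx a ha

namespace Subgroup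

variable {G : Type*} [Group G]

theorem commutator_inf_le_inf {A B H K : Subgroup G} (hA : H ≤ normalizer (A : Set G))
    (hB : K ≤ normalizer (B : Set G)) : ⁅A ⊓ K, H ⊓ B⁆ ≤ A ⊓ B := by
  rw [commutator_le]
  intro d hd e he
  obtain ⟨hdA, hdK⟩ := mem_inf.mp hd
  obtain ⟨heH, heB⟩ := mem_inf.mp he
  refine mem_inf.mpr ⟨?_, ?_⟩
  · rw [commutatorElement_def, show d * e * d⁻¹ * e⁻¹ = d * (e * d⁻¹ * e⁻¹) by group]
    exact mul_mem hdA ((mem_normalizer_iff.mp (hA heH) d⁻¹).mp (inv_mem hdA))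
  · exact mul_mem ((mem_normalizer_iff.mp (hB hdK) e).mp heB) (inv_mem heB)

variable [TopologicalSpace G] [IsTopologicalGroup G]

theorem isClosed_center [T2Space G] : IsClosed (center G : Set G) := by
  rw [coe_center, ← Set.centralizer_univ]
  exact Set.isClosed_centralizer _

theorem le_center_of_dense_of_commutator_eq_bot [T2Space G] {D E : Subgroup G}
    (hD : Dense (D : Set G)) (h : ⁅D, E⁆ = ⊥) : E ≤ center G := by
  have hDE : (D : Set G) ⊆ centralizer (E : Set G) := commutator_eq_bot_iff_le_centralizer.mp h
  have hclosed : IsClosed (centralizer (E : Set G) : Set G) := Set.isClosed_centralizer _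
  refine centralizer_eq_top_iff_subset.mp (eq_top_iff.mpr fun g _ => ?_)
  exact hclosed.closure_subset_iff.mpr hDE (hD g)

theorem normal_topologicalClosure_of_dense_of_le_normalizer {A H : Subgroup G}
    (hH : Dense (H : Set G)) (hHA : H ≤ normalizer (A : Set G)) :
    A.topologicalClosure.Normal := by
  set S : Set G :=
    ⋂ n ∈ _root_.closure (A : Set G), (fun g => g * n * g⁻¹) ⁻¹' _root_.closure A
  have hS : IsClosed S := isClosed_biInter fun n _ => isClosed_closure.preimage (by fun_prop)
  have hHS : (H : Set G) ⊆ S := fun h hh => Set.mem_iInter₂.mpr fun n hn =>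
    map_mem_closure (f := fun g => h * g * h⁻¹) (IsTopologicalGroup.continuous_conj h) hn
      fun a ha => (mem_normalizer_iff.mp (hHA hh) a).mp ha
  exact ⟨fun n hn g => Set.mem_iInter₂.mp (hS.closure_subset_iff.mpr hHS (hH g)) n hn⟩

open scoped Pointwise in
theorem normalClosure_le_closure_union_of_dense {D L : Set G} (hD : Dense D)
    (hL : IsOpen (normalizer L : Set G)) : normalClosure L ≤ closure (D ∪ L) := by
  refine (closure_le _).mpr fun y hy => ?_
  obtain ⟨x, hxL, hxy⟩ := Group.mem_conjugatesOfSet_iff.mp hy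
  obtain ⟨g, rfl⟩ := isConj_iff.mp hxy
  obtain ⟨_, hdD, u, hu, rfl⟩ :=
    hD.exists_mem_open (hL.smul g) ⟨_, Set.smul_mem_smul_set (one_mem _)⟩
  have hd : g * u ∈ closure (D ∪ L) := subset_closure (Or.inl hdD)
  have hx : u⁻¹ * x * u ∈ closure (D ∪ L) :=
    subset_closure (Or.inr ((mem_set_normalizer_iff''.mp hu x).mp hxL))
  rw [show g * x * g⁻¹ = (g * u) * (u⁻¹ * x * u) * (g * u)⁻¹ by group]
  exact mul_mem (mul_mem hd hx) (inv_mem hd)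

theorem eq_closure_union_of_dense {B D : Subgroup G} {L : Set G} (hD : Dense (D : Set G))
    (hDB : D ≤ B) (hL : IsOpen (normalizer L : Set G)) (hBL : B = normalClosure L) :
    B = closure (D ∪ L) :=
  le_antisymm (hBL ▸ normalClosure_le_closure_union_of_dense hD hL)
    ((closure_le _).mpr (Set.union_subset hDB (hBL ▸ subset_normalClosure)))

end Subgroup

open scoped Pointwise in
theorem exists_openSubgroup_subset_of_mem_nhds_one {G : Type*} [Group G] [TopologicalSpace G]
    [IsTopologicalGroup G] [LocallyCompactSpace G] [TotallyDisconnectedSpace G] [T2Space G]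
    {U : Set G} (hU : U ∈ nhds 1) : ∃ O : OpenSubgroup G, (O : Set G) ⊆ U := by
  obtain ⟨K, hK, hKU, hKc⟩ := local_compact_nhds hU
  obtain ⟨V, ⟨hVclosed, hVopen⟩, h1V, hVK⟩ :=
    loc_compact_Haus_tot_disc_of_zero_dim.mem_nhds_iff.mp (interior_mem_nhds.mpr hK)
  have hVc : IsCompact V := hKc.of_isClosed_subset hVclosed (hVK.trans interior_subset)
  -- The stabiliser of the compact open neighbourhood `V` of `1` is open and contained in `V`.
  obtain ⟨W, hW, hWV⟩ := compact_open_separated_mul_left hVc hVopen subset_rfl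
  have hstab : W ∩ W⁻¹ ⊆ MulAction.stabilizer G V := fun w ⟨hw, hw'⟩ =>
    MulAction.mem_stabilizer_iff.mpr <| subset_antisymm ((Set.smul_set_subset_mul hw).trans hWV)
      (Set.subset_smul_set_iff.mpr ((Set.smul_set_subset_mul (Set.mem_inv.mp hw')).trans hWV))
  refine ⟨⟨MulAction.stabilizer G V, Subgroup.isOpen_of_mem_nhds _
    (Filter.mem_of_superset (Filter.inter_mem hW (inv_mem_nhds_one G hW)) hstab)⟩, fun g hg => ?_⟩
  have hgV : g • (1 : G) ∈ V := MulAction.mem_stabilizer_iff.mp hg ▸ Set.smul_mem_smul_set h1V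
  rw [smul_eq_mul, mul_one] at hgV
  exact hKU (interior_subset (hVK hgV))

def IsTopologicallySimple (G : Type*) [Group G] [TopologicalSpace G] : Prop :=
  ∀ N : Subgroup G, N.Normal → IsClosed (N : Set G) → N = ⊥ ∨ N = ⊤

namespace IsTopologicallySimple

open Subgroup

variable {G : Type*} [Group G] [TopologicalSpace G] [IsTopologicalGroup G]
  (hG : IsTopologicallySimple G)
include hG

theorem dense_of_isSubnormal {A : Subgroup G} (hA : A.IsSubnormal) (hA₀ : A ≠ ⊥) :
    Dense (A : Set G) := by
  induction hA with
  | top => simp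
  | step A H hAH _ hN ih =>
    have hK := normal_topologicalClosure_of_dense_of_le_normalizer
      (ih (ne_bot_of_le_ne_bot hA₀ hAH)) ((normal_subgroupOf_iff_le_normalizer hAH).mp hN)
    rcases hG _ hK A.isClosed_topologicalClosure with h | h
    · exact absurd (le_bot_iff.mp (h ▸ A.le_topologicalClosure)) hA₀
    · rw [dense_iff_closure_eq, ← topologicalClosure_coe, h, coe_top]

theorem inf_ne_bot_of_center_eq_bot [T2Space G] (hZ : center G = ⊥) {A B : Subgroup G}
    (hA : A.IsSubnormal) (hB : B.IsSubnormal) (hA₀ : A ≠ ⊥) (hB₀ : B ≠ ⊥) : A ⊓ B ≠ ⊥ := by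
  induction hA generalizing B with
  | top => simpa
  | step A H hAH hH hNA ihA =>
    induction hB with
    | top => simpa
    | step B K hBK hK hNB ihB =>
      have hAK : A ⊓ K ≠ ⊥ := ihB (ne_bot_of_le_ne_bot hB₀ hBK)
      have hHB : H ⊓ B ≠ ⊥ := ihA (.step _ _ hBK hK hNB) (ne_bot_of_le_ne_bot hA₀ hAH) hB₀
      have hAK_dense := hG.dense_of_isSubnormal ((IsSubnormal.step _ _ hAH hH hNA).inf hK) hAK
      intro hAB
      have hcomm : ⁅A ⊓ K, H ⊓ B⁆ = ⊥ := le_bot_iff.mp <| hAB ▸ commutator_inf_le_inf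
        ((normal_subgroupOf_iff_le_normalizer hAH).mp hNA)
        ((normal_subgroupOf_iff_le_normalizer hBK).mp hNB)
      exact hHB (le_bot_iff.mp (hZ ▸ le_center_of_dense_of_commutator_eq_bot hAK_dense hcomm))

theorem eq_top_of_center_eq_top [LocallyCompactSpace G] [TotallyDisconnectedSpace G] [T2Space G]
    (hZ : center G = ⊤) {C : Subgroup G} (hC : C ≠ ⊥) : C = ⊤ := by
  have hnormal (N : Subgroup G) : N.Normal := ⟨fun n hn g => by
    rwa [mem_center_iff.mp (hZ ▸ mem_top n) g, mul_inv_cancel_right]⟩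
  obtain ⟨c, -, hc⟩ := (bot_or_exists_ne_one C).resolve_left hC
  obtain ⟨O, hO⟩ := exists_openSubgroup_subset_of_mem_nhds_one
    (isOpen_compl_singleton.mem_nhds (Ne.symm hc))
  have hO₀ : (O : Subgroup G) = ⊥ := (hG O (hnormal O) O.isClosed).resolve_right fun h =>
    hO (show c ∈ (O : Subgroup G) from h ▸ mem_top c) rfl
  have hCopen : IsOpen (C : Set G) := isOpen_mono bot_le (hO₀ ▸ O.isOpen)
  exact (hG C (hnormal C) (C.isClosed_of_isOpen hCopen)).resolve_left hC

theorem inf_ne_bot_of_isSubnormal [LocallyCompactSpace G] [TotallyDisconnectedSpace G]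
    [T2Space G] {A B : Subgroup G} (hA : A.IsSubnormal) (hB : B.IsSubnormal) (hA₀ : A ≠ ⊥)
    (hB₀ : B ≠ ⊥) : A ⊓ B ≠ ⊥ := by
  rcases hG _ inferInstance isClosed_center with hZ | hZ
  · exact hG.inf_ne_bot_of_center_eq_bot hZ hA hB hA₀ hB₀
  · rw [hG.eq_top_of_center_eq_top hZ hA₀, hG.eq_top_of_center_eq_top hZ hB₀, inf_top_eq]
    exact ne_bot_of_le_ne_bot hA₀ le_top

end IsTopologicallySimple

/-- Let `G` be a topologically simple t.d.l.c. group and let `A`, `B` be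
non-trivial subnormal subgroups. Then `A ∩ B` is dense; and if `B` is the normal closure of a
locally normal subgroup `L`, then `B = ⟨(A ∩ B) ∪ L⟩`, and `B` is the smallest subnormal
subgroup containing `L`. -/
theorem subnormal_intersection_dense
    (G : Type*) [Group G] [TopologicalSpace G] [IsTopologicalGroup G]
    [LocallyCompactSpace G] [TotallyDisconnectedSpace G] [T2Space G]
    (hts : ∀ N : Subgroup G, N.Normal → IsClosed (N : Set G) → N = ⊥ ∨ N = ⊤)
    (A B : Subgroup G) (hA : A ≠ ⊥) (hB : B ≠ ⊥)
    (hAs : IsSubnormal A) (hBs : IsSubnormal B) :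
    Dense ((A ⊓ B : Subgroup G) : Set G) ∧
    ∀ L : Subgroup G, IsCompact (L : Set G) → IsOpen (Subgroup.normalizer (L : Set G) : Set G) →
      B = Subgroup.normalClosure (L : Set G) →
      (B = Subgroup.closure (((A ⊓ B : Subgroup G) : Set G) ∪ (L : Set G)) ∧
       ∀ C : Subgroup G, IsSubnormal C → L ≤ C → B ≤ C) := by
  have hG : IsTopologicallySimple G := hts
  have hdense {C : Subgroup G} (hC : IsSubnormal C) (hC₀ : C ≠ ⊥) :
      Dense ((C ⊓ B : Subgroup G) : Set G) :=
    hG.dense_of_isSubnormal (hC.isSubnormal.inf hBs.isSubnormal)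
      (hG.inf_ne_bot_of_isSubnormal hC.isSubnormal hBs.isSubnormal hC₀ hB)
  refine ⟨hdense hAs hA, fun L _ hL hBL =>
    ⟨Subgroup.eq_closure_union_of_dense (hdense hAs hA) inf_le_right hL hBL, fun C hC hLC => ?_⟩⟩
  have hC₀ : C ≠ ⊥ := by
    rintro rfl
    exact hB (le_bot_iff.mp (hBL ▸ Subgroup.normalClosure_le_normal hLC))
  calc B = Subgroup.closure (((C ⊓ B : Subgroup G) : Set G) ∪ (L : Set G)) :=
        Subgroup.eq_closure_union_of_dense (hdense hC hC₀) inf_le_right hL hBL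
    _ ≤ C := (Subgroup.closure_le _).mpr (Set.union_subset inf_le_left hLC)
end

section
/- Let G be a profinite group and let N be a countable dense normal subgroup of G. Then N is contained in the quasi-centre of G, i.e. every element of N has open centraliser in G; in particular, the conjugacy class in G of every element of N is finite. -/
/-!
If `x` lies in a countable normal subgroup, its conjugacy class is countable, so by
orbit–stabiliser the closed subgroup `C_G(x)` has countable index. By the Baire category
theorem (a compact Hausdorff space is Baire) one of its countably many closed cosets has nonempty
interior, hence `C_G(x)` is open. An open subgroup of a compact group has finite index, so the
conjugacy class of `x` is finite.
-/

open Subgroup Topology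

section

variable {G : Type*} [Group G]

lemma setOf_exists_eq_conj_eq_conjugatesOf (x : G) :
    {y : G | ∃ g : G, y = g * x * g⁻¹} = conjugatesOf x := by
  ext y
  simp only [conjugatesOf, isConj_iff, eq_comm, Set.mem_ofPred_eq]

noncomputable def conjugatesOfEquivQuotientCentralizer (x : G) :
    conjugatesOf x ≃ G ⧸ centralizer {x} :=
  (Equiv.setCongr (Set.ext fun _ => isConj_comm.trans ConjAct.mem_orbit_conjAct.symm)).trans <|
    (MulAction.orbitEquivQuotientStabilizer (ConjAct G) x).trans
      (Subgroup.quotientEquivOfEq (ConjAct.stabilizer_eq_centralizer x))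

section Topology

variable [TopologicalSpace G] [IsTopologicalGroup G]

lemma Subgroup.isOpen_of_isClosed_of_countable_quotient [BaireSpace G] (H : Subgroup G)
    [Countable (G ⧸ H)] (hH : IsClosed (H : Set G)) : IsOpen (H : Set G) := by
  have : T1Space (G ⧸ H) := QuotientGroup.t1Space_iff.mpr hH
  obtain ⟨q, g, hg⟩ : ∃ q : G ⧸ H, (interior (QuotientGroup.mk ⁻¹' {q} : Set G)).Nonempty :=
    nonempty_interior_of_iUnion_of_closed
      (fun q => isClosed_singleton.preimage QuotientGroup.continuous_mk)
      (Set.eq_univ_of_forall fun g => Set.mem_iUnion.2 ⟨(g : G ⧸ H), rfl⟩)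
  obtain rfl : (g : G ⧸ H) = q := interior_subset (s := QuotientGroup.mk ⁻¹' {q}) hg
  have hcoset : (g * ·) ⁻¹' (QuotientGroup.mk ⁻¹' {(g : G ⧸ H)}) ⊆ (H : Set G) := fun y hy => by
    simpa using QuotientGroup.eq.mp hy
  have hnhds : QuotientGroup.mk ⁻¹' {(g : G ⧸ H)} ∈ 𝓝 (g * 1) := by
    simpa using mem_interior_iff_mem_nhds.mp hg
  exact H.isOpen_of_mem_nhds (g := 1) <| Filter.mem_of_superset
    ((continuous_const_mul g).continuousAt.preimage_mem_nhds hnhds) hcoset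

lemma isOpen_centralizer_of_countable_conjugatesOf [BaireSpace G] [T2Space G] {x : G}
    (hx : (conjugatesOf x).Countable) : IsOpen (centralizer {x} : Set G) :=
  have : Countable (G ⧸ centralizer {x}) :=
    (conjugatesOfEquivQuotientCentralizer x).symm.countable_iff.mpr hx.to_subtype
  (centralizer {x}).isOpen_of_isClosed_of_countable_quotient (Set.isClosed_centralizer _)

lemma finite_conjugatesOf_of_isOpen_centralizer [CompactSpace G] {x : G}
    (hx : IsOpen (centralizer {x} : Set G)) : (conjugatesOf x).Finite :=
  have := (centralizer {x}).quotient_finite_of_isOpen hx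
  Set.finite_coe_iff.mp (Finite.of_equiv _ (conjugatesOfEquivQuotientCentralizer x).symm)

end Topology

end

theorem countable_dense_normal_subset_quasiCentre_general
    (G : Type*) [Group G] [TopologicalSpace G] [IsTopologicalGroup G]
    [CompactSpace G] [T2Space G]
    (N : Subgroup G) (hN : N.Normal) (hcount : (N : Set G).Countable) :
    (∀ x ∈ N, IsOpen (Subgroup.centralizer {x} : Set G)) ∧
    (∀ x ∈ N, {y : G | ∃ g : G, y = g * x * g⁻¹}.Finite) := by
  have hopen : ∀ x ∈ N, IsOpen (centralizer {x} : Set G) := fun x hx =>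
    isOpen_centralizer_of_countable_conjugatesOf
      (hcount.mono (Group.conjugates_subset_normal hx))
  refine ⟨hopen, fun x hx => ?_⟩
  rw [setOf_exists_eq_conj_eq_conjugatesOf]
  exact finite_conjugatesOf_of_isOpen_centralizer (hopen x hx)

/-- Let `G` be a profinite group and `N` a countable dense normal subgroup.
Then `N` is contained in the quasi-centre of `G`: every element of `N` has open centraliser,
and in particular its conjugacy class in `G` is finite. -/
theorem countable_dense_normal_subset_quasiCentre
    (G : Type*) [Group G] [TopologicalSpace G] [IsTopologicalGroup G]
    [CompactSpace G] [TotallyDisconnectedSpace G] [T2Space G]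
    (N : Subgroup G) (hN : N.Normal) (hcount : (N : Set G).Countable)
    (hdense : Dense (N : Set G)) :
    (∀ x ∈ N, IsOpen (Subgroup.centralizer {x} : Set G)) ∧
    (∀ x ∈ N, {y : G | ∃ g : G, y = g * x * g⁻¹}.Finite) :=
  countable_dense_normal_subset_quasiCentre_general G N hN hcount
end

section
/- Let U be a profinite group, and let V and W be closed normal subgroups of U such that W is an open subgroup of V and the quotient group V/W is not nilpotent. Then there is a closed normal subgroup N of U such that N is not contained in W (so in particular N is non-trivial), and such that every closed normal subgroup L of U with LW ⊇ V satisfies L ⊇ N. -/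
open Pointwise

/-! If `L₁, …, Lₙ` are normal subgroups of `V` with `Lᵢ W = V`, the estimate
`⁅K W, L W⁆ ≤ (K ⊓ L) W` shows by induction that the `n`-th term of the lower central series of `V`
lies in `(L₁ ⊓ ⋯ ⊓ Lₙ) W`; as `V/W` is not nilpotent, `L₁ ⊓ ⋯ ⊓ Lₙ ⊄ W`. Since `V \ W` is
compact, the finite intersection property then yields a point of `V \ W` lying in every closed
normal `L` with `LW ⊇ V`, i.e. in their intersection `N`. -/

namespace Subgroup

variable {G : Type*} [Group G]

theorem commutator_sup_sup_le_inf_sup (K L W : Subgroup G) [K.Normal] [L.Normal] [W.Normal] :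
    ⁅K ⊔ W, L ⊔ W⁆ ≤ (K ⊓ L) ⊔ W := by
  set f := QuotientGroup.mk' W
  have hW : W.map f = ⊥ := by rw [map_eq_bot_iff, QuotientGroup.ker_mk']
  calc ⁅K ⊔ W, L ⊔ W⁆ ≤ (⁅K ⊔ W, L ⊔ W⁆.map f).comap f := le_comap_map f _
    _ = (⁅K, L⁆.map f).comap f := by
      rw [map_commutator, map_commutator, map_sup, map_sup, hW, sup_bot_eq, sup_bot_eq]
    _ ≤ ((K ⊓ L).map f).comap f := comap_mono (map_mono (commutator_le_inf K L))
    _ = (K ⊓ L) ⊔ W := by rw [comap_map_eq, QuotientGroup.ker_mk']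

theorem lowerCentralSeries_le_biInf_sup {ι : Type*} (L : ι → Subgroup G) (W : Subgroup G)
    [W.Normal] (hL : ∀ i, (L i).Normal) (hLW : ∀ i, L i ⊔ W = ⊤) (s : Finset ι) :
    lowerCentralSeries ⊤ s.card ≤ (⨅ i ∈ s, L i) ⊔ W := by
  classical
  induction s using Finset.induction_on with
  | empty => simp
  | insert a s has ih =>
    have : (⨅ i ∈ s, L i).Normal :=
      normal_iInf_normal fun i => normal_iInf_normal fun _ => hL i
    have := hL a
    rw [Finset.card_insert_of_notMem has, lowerCentralSeries_succ, Finset.iInf_insert, inf_comm]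
    calc ⁅lowerCentralSeries ⊤ s.card, ⊤⁆ ≤ ⁅(⨅ i ∈ s, L i) ⊔ W, L a ⊔ W⁆ :=
          commutator_mono ih (hLW a).ge
      _ ≤ ((⨅ i ∈ s, L i) ⊓ L a) ⊔ W := commutator_sup_sup_le_inf_sup _ _ _

theorem isNilpotent_quotient_of_lowerCentralSeries_le {W : Subgroup G} [W.Normal] {n : ℕ}
    (h : lowerCentralSeries ⊤ n ≤ W) : Group.IsNilpotent (G ⧸ W) := by
  refine nilpotent_iff_lowerCentralSeries.mpr ⟨n, ?_⟩
  rw [← map_top_of_surjective _ (QuotientGroup.mk'_surjective W), ← map_lowerCentralSeries,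
    map_eq_bot_iff, QuotientGroup.ker_mk']
  exact h

theorem not_biInf_le_of_not_isNilpotent_quotient {ι : Type*} {L : ι → Subgroup G}
    {W : Subgroup G} [W.Normal] (hnil : ¬ Group.IsNilpotent (G ⧸ W)) (hL : ∀ i, (L i).Normal)
    (hLW : ∀ i, L i ⊔ W = ⊤) (s : Finset ι) : ¬ ⨅ i ∈ s, L i ≤ W := fun hle =>
  hnil <| isNilpotent_quotient_of_lowerCentralSeries_le <|
    (lowerCentralSeries_le_biInf_sup L W hL hLW s).trans (sup_le hle le_rfl)

theorem not_iInf_le_of_forall_finset [TopologicalSpace G] [CompactSpace G] {ι : Type*}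
    {L : ι → Subgroup G} {W : Subgroup G} (hW : IsOpen (W : Set G))
    (hL : ∀ i, IsClosed (L i : Set G)) (hfin : ∀ s : Finset ι, ¬ ⨅ i ∈ s, L i ≤ W) :
    ¬ ⨅ i, L i ≤ W := by
  have hmeet : ∀ s : Finset ι, ((W : Set G)ᶜ ∩ ⋂ i ∈ s, (L i : Set G)).Nonempty := fun s => by
    obtain ⟨g, hgL, hgW⟩ := SetLike.not_le_iff_exists.mp (hfin s)
    exact ⟨g, hgW, by simpa using hgL⟩
  obtain ⟨g, hgW, hgL⟩ :=
    hW.isClosed_compl.isCompact.inter_iInter_nonempty _ hL hmeet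
  exact fun hle => hgW (hle (by simpa using hgL))

theorem subgroupOf_sup_subgroupOf_eq_top {H L W : Subgroup G} (hWH : W ≤ H)
    (h : (H : Set G) ⊆ L * W) : L.subgroupOf H ⊔ W.subgroupOf H = ⊤ := by
  refine eq_top_iff.mpr fun v _ => ?_
  obtain ⟨l, hl, w, hw, hlw⟩ := h v.2
  have hlH : l ∈ H := by
    rw [eq_mul_inv_of_mul_eq hlw]
    exact H.mul_mem v.2 (H.inv_mem (hWH hw))
  rw [show v = ⟨l, hlH⟩ * ⟨w, hWH hw⟩ from Subtype.ext hlw.symm]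
  exact mul_mem_sup (mem_subgroupOf.mpr hl) (mem_subgroupOf.mpr hw)

end Subgroup

theorem exists_closed_normal_not_le_of_non_nilpotent_quotient_general
    (U : Type*) [Group U] [TopologicalSpace U] [CompactSpace U]
    (V W : Subgroup U) (hW : W.Normal)
    (hVc : IsClosed (V : Set U))
    (hWV : W ≤ V) (hWopen : IsOpen {v : V | (v : U) ∈ W})
    (hnotnil : ¬ @Group.IsNilpotent (↥V ⧸ W.subgroupOf V)
      (@QuotientGroup.Quotient.group ↥V _ (W.subgroupOf V) (hW.subgroupOf V))) :
    ∃ N : Subgroup U, N.Normal ∧ IsClosed (N : Set U) ∧ ¬ N ≤ W ∧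
      ∀ L : Subgroup U, L.Normal → IsClosed (L : Set U) →
        (V : Set U) ⊆ (L : Set U) * (W : Set U) → N ≤ L := by
  let ι := {L : Subgroup U // L.Normal ∧ IsClosed (L : Set U) ∧ (V : Set U) ⊆ L * W}
  have : CompactSpace V := isCompact_iff_compactSpace.mp hVc.isCompact
  have : (W.subgroupOf V).Normal := hW.subgroupOf V
  have hnotle : ¬ ⨅ L : ι, L.1.subgroupOf V ≤ W.subgroupOf V :=
    Subgroup.not_iInf_le_of_forall_finset hWopen
      (fun L => L.2.2.1.preimage continuous_subtype_val)
      (Subgroup.not_biInf_le_of_not_isNilpotent_quotient hnotnil (fun L => L.2.1.subgroupOf V)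
        (fun L => Subgroup.subgroupOf_sup_subgroupOf_eq_top hWV L.2.2.2))
  obtain ⟨v, hvL, hvW⟩ := SetLike.not_le_iff_exists.mp hnotle
  refine ⟨⨅ L : ι, L.1, Subgroup.normal_iInf_normal fun L => L.2.1, ?_, fun hle => hvW (hle ?_),
    fun L hLn hLc hLV => iInf_le (fun L : ι => L.1) ⟨L, hLn, hLc, hLV⟩⟩
  · rw [Subgroup.coe_iInf]
    exact isClosed_iInter fun L => L.2.2.1
  · simpa [Subgroup.mem_iInf, Subgroup.mem_subgroupOf] using hvL

/-- Let `U` be a profinite group, and `V`, `W` closed normal subgroups with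
`W` open in `V` and `V/W` not nilpotent. Then there is a closed normal subgroup `N` of `U`,
not contained in `W`, such that every closed normal subgroup `L` of `U` with `LW ⊇ V`
contains `N`. -/
theorem exists_closed_normal_not_le_of_non_nilpotent_quotient
    (U : Type*) [Group U] [TopologicalSpace U] [IsTopologicalGroup U]
    [CompactSpace U] [TotallyDisconnectedSpace U] [T2Space U]
    (V W : Subgroup U) (hV : V.Normal) (hW : W.Normal)
    (hVc : IsClosed (V : Set U)) (hWc : IsClosed (W : Set U))
    (hWV : W ≤ V) (hWopen : IsOpen {v : V | (v : U) ∈ W})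
    (hnotnil : ¬ @Group.IsNilpotent (↥V ⧸ W.subgroupOf V)
      (@QuotientGroup.Quotient.group ↥V _ (W.subgroupOf V) (hW.subgroupOf V))) :
    ∃ N : Subgroup U, N.Normal ∧ IsClosed (N : Set U) ∧ ¬ N ≤ W ∧
      ∀ L : Subgroup U, L.Normal → IsClosed (L : Set U) →
        (V : Set U) ⊆ (L : Set U) * (W : Set U) → N ≤ L :=
  exists_closed_normal_not_le_of_non_nilpotent_quotient_general U V W hW hVc hWV hWopen hnotnil
end

section
/- Let U be a non-trivial profinite group whose Mel'nikov subgroup M(U) has finite index in U, and let H be a closed normal subgroup of U such that the quasi-centraliser QC_U(H) is dense in U. Then H ∩ Z(U) has finite index in H, where Z(U) is the centre of U. -/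
/-!
Only finitely many open normal subgroups `V` have simple quotient `U/V`, since all of them contain
`M(U)`. The centralisers `C_U(H ∩ W)`, for `W` open normal, form a directed family, so there is a
`W₀` such that every such `V` containing `C = C_U(H ∩ W₀)` contains the whole family, hence the
quasi-centraliser. If `C` were proper it would be a closed normal proper subgroup, hence contained
in some `V` of this kind; density of the quasi-centraliser in the closed subgroup `V` then forces
`V = U`, a contradiction. So `H ∩ W₀` is central, and it has finite index in `H` because `W₀` is
open.
-/

/-- The Mel'nikov subgroup of a topological group: the intersection of all open normal
subgroups `V` such that the quotient `U/V` is a simple group. -/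
def melnikovSubgroup (U : Type*) [Group U] [TopologicalSpace U] : Subgroup U :=
  ⨅ V ∈ {V : Subgroup U | IsOpen (V : Set U) ∧ ∃ hn : V.Normal,
    @IsSimpleGroup (U ⧸ V) (@QuotientGroup.Quotient.group U _ V hn)},
    V

theorem Set.Finite.exists_le_imp_forall_le {ι α : Type*} [Preorder ι] [IsCodirectedOrder ι]
    [Nonempty ι] [Preorder α] {f : ι → α} (hf : Antitone f) {S : Set α} (hS : S.Finite) :
    ∃ i₀, ∀ V ∈ S, f i₀ ≤ V → ∀ i, f i ≤ V := by
  have hwitness : ∀ V, ∃ i, f i ≤ V → ∀ j, f j ≤ V := fun V => by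
    by_cases h : ∀ j, f j ≤ V
    · exact ⟨Classical.arbitrary ι, fun _ => h⟩
    · obtain ⟨j, hj⟩ := not_forall.mp h
      exact ⟨j, fun h' => absurd h' hj⟩
  choose g hg using hwitness
  have : Finite S := hS.to_subtype
  obtain ⟨i₀, hi₀⟩ := _root_.Finite.exists_ge fun V : S => g V
  exact ⟨i₀, fun V hV hle => hg V ((hf (hi₀ ⟨V, hV⟩)).trans hle)⟩

theorem QuotientGroup.isSimpleGroup_of_maximal_normal {G : Type*} [Group G] {V : Subgroup G}
    [V.Normal] (hV : V ≠ ⊤)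
    (hmax : ∀ N : Subgroup G, N.Normal → V ≤ N → N ≠ ⊤ → N ≤ V) : IsSimpleGroup (G ⧸ V) := by
  have : Nontrivial (G ⧸ V) := QuotientGroup.nontrivial_iff.mpr hV
  refine ⟨fun P hP => ?_⟩
  have hVP : V ≤ P.comap (mk' V) := by
    simpa only [ker_mk'] using P.ker_le_comap (mk' V)
  rw [← P.map_comap_eq_self_of_surjective (mk'_surjective V)]
  by_cases htop : P.comap (mk' V) = ⊤
  · right
    rw [htop]
    exact Subgroup.map_top_of_surjective _ (mk'_surjective V)
  · left
    rw [le_antisymm (hmax _ (hP.comap _) hVP htop) hVP]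
    exact map_mk'_self V

namespace Subgroup

variable {G : Type*} [Group G]

theorem le_of_image_mk_subset {M V W : Subgroup G} (hMW : M ≤ W)
    (h : (QuotientGroup.mk '' (V : Set G) : Set (G ⧸ M)) ⊆ QuotientGroup.mk '' (W : Set G)) :
    V ≤ W := by
  intro x hx
  obtain ⟨y, hy, hyx⟩ := h ⟨x, hx, rfl⟩
  simpa using W.mul_mem hy (hMW (QuotientGroup.eq.mp hyx))

theorem finite_setOf_le_of_index_ne_zero {M : Subgroup G} (hM : M.index ≠ 0) :
    {V : Subgroup G | M ≤ V}.Finite := by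
  have : Finite (G ⧸ M) := @finite_quotient_of_finiteIndex _ _ M ⟨hM⟩
  refine Set.Finite.of_finite_image
    (f := fun V : Subgroup G => (QuotientGroup.mk '' (V : Set G) : Set (G ⧸ M)))
    (Set.toFinite _) fun V hV W hW hVW => ?_
  exact le_antisymm (le_of_image_mk_subset hW hVW.le) (le_of_image_mk_subset hV hVW.ge)

theorem exists_le_isSimpleGroup_quotient {K : Subgroup G} [K.Normal] (hK : K.index ≠ 0)
    (hKtop : K ≠ ⊤) : ∃ V : Subgroup G, K ≤ V ∧ ∃ _ : V.Normal, IsSimpleGroup (G ⧸ V) := by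
  set F := {V : Subgroup G | K ≤ V ∧ V.Normal ∧ V ≠ ⊤}
  have hF : F.Finite := (finite_setOf_le_of_index_ne_zero hK).subset fun V hV => hV.1
  obtain ⟨V, hKV, ⟨-, hVn, hVtop⟩, hVmax⟩ :=
    hF.exists_le_maximal (show K ∈ F from ⟨le_rfl, inferInstance, hKtop⟩)
  refine ⟨V, hKV, hVn, QuotientGroup.isSimpleGroup_of_maximal_normal hVtop ?_⟩
  exact fun N hN hVN hNtop => hVmax ⟨hKV.trans hVN, hN, hNtop⟩ hVN

end Subgroup

def openSimpleQuotientKernels (U : Type*) [Group U] [TopologicalSpace U] : Set (Subgroup U) :=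
  {V : Subgroup U | IsOpen (V : Set U) ∧ ∃ hn : V.Normal,
    @IsSimpleGroup (U ⧸ V) (@QuotientGroup.Quotient.group U _ V hn)}

section Profinite

variable {U : Type*} [Group U] [TopologicalSpace U]

def quasiCentralizer (H : Subgroup U) : Set U :=
  {x : U | ∃ W : Subgroup U, IsOpen (W : Set U) ∧
    x ∈ Subgroup.centralizer ((H ⊓ W : Subgroup U) : Set U)}

theorem melnikovSubgroup_le {V : Subgroup U} (hV : V ∈ openSimpleQuotientKernels U) :
    melnikovSubgroup U ≤ V :=
  iInf₂_le V hV

theorem ne_top_of_mem_openSimpleQuotientKernels {V : Subgroup U}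
    (hV : V ∈ openSimpleQuotientKernels U) : V ≠ ⊤ := by
  obtain ⟨-, _, hsimple⟩ := hV
  exact QuotientGroup.nontrivial_iff.mp hsimple.toNontrivial

theorem finite_openSimpleQuotientKernels (hMel : (melnikovSubgroup U).index ≠ 0) :
    (openSimpleQuotientKernels U).Finite :=
  (Subgroup.finite_setOf_le_of_index_ne_zero hMel).subset fun _ => melnikovSubgroup_le

variable [IsTopologicalGroup U] [CompactSpace U]

theorem exists_mem_openSimpleQuotientKernels_le [TotallyDisconnectedSpace U] {N : Subgroup U}
    [N.Normal] (hNc : IsClosed (N : Set U)) (hN : N ≠ ⊤) :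
    ∃ V ∈ openSimpleQuotientKernels U, N ≤ V := by
  obtain ⟨O, ⟨hOo, hNO⟩, hOtop⟩ : ∃ O : Subgroup U, (IsOpen (O : Set U) ∧ N ≤ O) ∧ O ≠ ⊤ := by
    by_contra! h
    have hNinf := ProfiniteGrp.closedSubgroup_eq_sInf_open ⟨N, hNc⟩
    exact hN (hNinf.trans (sInf_eq_top.mpr h))
  have : Finite (U ⧸ O) := O.quotient_finite_of_isOpen hOo
  have : O.FiniteIndex := O.finiteIndex_of_finite_quotient
  have hcore : IsOpen (O.normalCore : Set U) := O.normalCore.isOpen_of_isClosed_of_finiteIndex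
    (O.normalCore_isClosed (O.isClosed_of_isOpen hOo))
  obtain ⟨V, hcoreV, hVn, hVs⟩ := Subgroup.exists_le_isSimpleGroup_quotient
    Subgroup.FiniteIndex.index_ne_zero (ne_top_of_le_ne_top hOtop O.normalCore_le)
  exact ⟨V, ⟨Subgroup.isOpen_mono hcoreV hcore, hVn, hVs⟩,
    (Subgroup.normal_le_normalCore.mpr hNO).trans hcoreV⟩

theorem quasiCentralizer_subset {H V : Subgroup U}
    (h : ∀ W : OpenNormalSubgroup U,
      Subgroup.centralizer ((H ⊓ W.toSubgroup : Subgroup U) : Set U) ≤ V) :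
    quasiCentralizer H ⊆ V := by
  rintro x ⟨W, hWo, hx⟩
  obtain ⟨O, hO⟩ := IsTopologicalGroup.exist_openNormalSubgroup_sub_clopen_nhds_of_one
    ⟨W.isClosed_of_isOpen hWo, hWo⟩ W.one_mem
  exact h O (Subgroup.centralizer_le (inf_le_inf_left H fun _ hy => hO hy) hx)

theorem exists_isOpen_inf_le_center [TotallyDisconnectedSpace U] [T2Space U]
    (hMel : (melnikovSubgroup U).index ≠ 0) {H : Subgroup U} [H.Normal]
    (hQC : Dense (quasiCentralizer H)) :
    ∃ W : Subgroup U, IsOpen (W : Set U) ∧ H ⊓ W ≤ Subgroup.center U := by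
  set C : OpenNormalSubgroup U → Subgroup U :=
    fun W => Subgroup.centralizer ((H ⊓ W.toSubgroup : Subgroup U) : Set U)
  have hC : Antitone C := fun _ _ hWW' => Subgroup.centralizer_le (inf_le_inf_left H hWW')
  have : Nonempty (OpenNormalSubgroup U) := ⟨{ toSubgroup := ⊤, isOpen' := isOpen_univ }⟩
  obtain ⟨W₀, hW₀⟩ := (finite_openSimpleQuotientKernels hMel).exists_le_imp_forall_le hC
  refine ⟨W₀, W₀.isOpen, ?_⟩
  by_contra hW₀central
  obtain ⟨V, hV, hCV⟩ := exists_mem_openSimpleQuotientKernels_le (N := C W₀)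
    (Set.isClosed_centralizer _) (mt Subgroup.centralizer_eq_top_iff_subset.mp hW₀central)
  have hQCV : quasiCentralizer H ⊆ V := quasiCentralizer_subset (hW₀ V hV hCV)
  have hVclosed : IsClosed (V : Set U) := V.isClosed_of_isOpen hV.1
  refine ne_top_of_mem_openSimpleQuotientKernels hV (Subgroup.coe_eq_univ.mp ?_)
  rw [← hVclosed.closure_eq]
  exact (hQC.mono hQCV).closure_eq

end Profinite

theorem finite_index_center_of_dense_quasiCentralizer_general
    (U : Type*) [Group U] [TopologicalSpace U] [IsTopologicalGroup U]
    [CompactSpace U] [TotallyDisconnectedSpace U] [T2Space U]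
    (hMel : (melnikovSubgroup U).index ≠ 0)
    (H : Subgroup U) (hHn : H.Normal)
    (hQC : Dense {x : U | ∃ W : Subgroup U, IsOpen (W : Set U) ∧
      x ∈ Subgroup.centralizer ((H ⊓ W : Subgroup U) : Set U)}) :
    (Subgroup.center U).relIndex H ≠ 0 := by
  obtain ⟨W, hWo, hWZ⟩ := exists_isOpen_inf_le_center (H := H) hMel hQC
  have : Finite (U ⧸ W) := W.quotient_finite_of_isOpen hWo
  have : W.FiniteIndex := W.finiteIndex_of_finite_quotient
  have hHW : (H ⊓ W).relIndex H ≠ 0 := by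
    rw [Subgroup.inf_relIndex_left]
    exact mt Subgroup.index_eq_zero_of_relIndex_eq_zero Subgroup.FiniteIndex.index_ne_zero
  exact fun h => hHW (Subgroup.relIndex_eq_zero_of_le_left hWZ h)

/-- Let `U` be a non-trivial profinite group whose Mel'nikov subgroup has
finite index, and let `H` be a closed normal subgroup whose quasi-centraliser
`QC_U(H) = ⋃_W C_U(H ∩ W)` (union over open subgroups `W`) is dense in `U`. Then
`H ∩ Z(U)` has finite index in `H`. -/
theorem finite_index_center_of_dense_quasiCentralizer
    (U : Type*) [Group U] [TopologicalSpace U] [IsTopologicalGroup U]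
    [CompactSpace U] [TotallyDisconnectedSpace U] [T2Space U] [Nontrivial U]
    (hMel : (melnikovSubgroup U).index ≠ 0)
    (H : Subgroup U) (hHn : H.Normal) (hHc : IsClosed (H : Set U))
    (hQC : Dense {x : U | ∃ W : Subgroup U, IsOpen (W : Set U) ∧
      x ∈ Subgroup.centralizer ((H ⊓ W : Subgroup U) : Set U)}) :
    (Subgroup.center U).relIndex H ≠ 0 :=
  finite_index_center_of_dense_quasiCentralizer_general U hMel H hHn hQC
end

section
/- Let Ω be a non-empty compact, totally disconnected, Hausdorff topological space and let G be a group acting on Ω by homeomorphisms such that every G-orbit is dense in Ω. Suppose there exist g ∈ G and a clopen subset α of Ω such that the image gα is strictly contained in α. Then there is no G-invariant regular Borel probability measure on Ω. (This is the content of the paper's proposition that a t.d.l.c. group acting minimally on the Stone space of a Boolean algebra with a skewering element cannot be amenable.) -/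
/-!
The set `α \ g • α` is open and nonempty, and it is null for any finite invariant measure, since
`g • α` and its superset `α` have the same measure. Density of the orbits makes finitely many
translates of it cover the compact space, so the measure vanishes.
-/

open MeasureTheory
open scoped Pointwise

namespace MeasureTheory

variable {G α : Type*} [Group G] [MulAction G α] [MeasurableSpace α] {μ : Measure α}

theorem SMulInvariantMeasure.of_measure_image_smul
    (h : ∀ g : G, ∀ s : Set α, MeasurableSet s → μ ((fun x => g • x) '' s) = μ s) :
    SMulInvariantMeasure G α μ where
  measure_preimage_smul g s hs := by
    rw [Set.preimage_smul]
    exact h g⁻¹ s hs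

theorem measure_diff_smul_eq_zero [IsFiniteMeasure μ] [SMulInvariantMeasure G α μ] {g : G}
    {s : Set α} (hs : g • s ⊆ s) (hgs : NullMeasurableSet (g • s) μ) : μ (s \ g • s) = 0 := by
  rw [measure_sdiff hs hgs (measure_ne_top μ _), measure_smul, tsub_self]

theorem eq_zero_of_smul_ssubset [TopologicalSpace α] [CompactSpace α] [OpensMeasurableSpace α]
    [ContinuousConstSMul G α] [MulAction.IsMinimal G α] [IsFiniteMeasure μ]
    [SMulInvariantMeasure G α μ] {g : G} {s : Set α} (hs : IsClopen s) (hgs : g • s ⊂ s) :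
    μ = 0 := by
  by_contra hμ
  have hpos : 0 < μ (s \ g • s) :=
    measure_isOpen_pos_of_smulInvariant_of_compact_ne_zero G isCompact_univ
      (Measure.measure_univ_ne_zero.mpr hμ) (hs.isOpen.sdiff (hs.isClosed.smul g))
      (Set.nonempty_of_ssubset hgs)
  rw [measure_diff_smul_eq_zero hgs.subset (hs.isClosed.smul g).nullMeasurableSet] at hpos
  exact hpos.false

end MeasureTheory

theorem no_invariant_measure_of_skewering_general
    (Ω : Type*) [TopologicalSpace Ω] [CompactSpace Ω]
    [MeasurableSpace Ω] [BorelSpace Ω]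
    (G : Type*) [Group G] [MulAction G Ω]
    (hcont : ∀ g : G, Continuous fun x : Ω => g • x)
    (hmin : ∀ x : Ω, Dense (MulAction.orbit G x))
    (hskew : ∃ g : G, ∃ α : Set Ω, IsClopen α ∧ (fun x => g • x) '' α ⊂ α) :
    ¬ ∃ μ : Measure Ω, IsProbabilityMeasure μ ∧ μ.Regular ∧
      ∀ g : G, ∀ A : Set Ω, MeasurableSet A → μ ((fun x => g • x) '' A) = μ A := by
  rintro ⟨μ, hμ, -, hinv⟩
  obtain ⟨g, α, hα, hgα⟩ := hskew
  have : ContinuousConstSMul G Ω := ⟨hcont⟩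
  have : MulAction.IsMinimal G Ω := ⟨hmin⟩
  have : SMulInvariantMeasure G Ω μ := .of_measure_image_smul hinv
  exact IsProbabilityMeasure.ne_zero μ (eq_zero_of_smul_ssubset hα hgα)

/-- Let `Ω` be a non-empty profinite space and `G` a group acting on `Ω` by
homeomorphisms with every orbit dense. If some `g ∈ G` maps a clopen set `α` strictly inside
itself, then there is no `G`-invariant regular Borel probability measure on `Ω`. -/
theorem no_invariant_measure_of_skewering
    (Ω : Type*) [TopologicalSpace Ω] [CompactSpace Ω]
    [TotallyDisconnectedSpace Ω] [T2Space Ω] [Nonempty Ω]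
    [MeasurableSpace Ω] [BorelSpace Ω]
    (G : Type*) [Group G] [MulAction G Ω]
    (hcont : ∀ g : G, Continuous fun x : Ω => g • x)
    (hmin : ∀ x : Ω, Dense (MulAction.orbit G x))
    (hskew : ∃ g : G, ∃ α : Set Ω, IsClopen α ∧ (fun x => g • x) '' α ⊂ α) :
    ¬ ∃ μ : Measure Ω, IsProbabilityMeasure μ ∧ μ.Regular ∧
      ∀ g : G, ∀ A : Set Ω, MeasurableSet A → μ ((fun x => g • x) '' A) = μ A :=
  no_invariant_measure_of_skewering_general Ω G hcont hmin hskew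
end
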